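/- Let ℱ be a nonempty closed convex set of free states, 𝔉 a set of channels each of which maps ℱ into ℱ, and assume that for every σ ∈ ℱ the replacement channel τ ↦ Tr(τ)σ belongs to 𝔉. Then for every channel N and every probe state ρ ∈ D(H), the advantage of ρ over free probe states in discriminating N from 𝔉 is bounded by the trace-norm resource of ρ: p_succ(N, 𝔉, ρ) − p_succ(N, 𝔉, ℱ) ≤ (1/2)·ω₁(ρ). -/

import Mathlib

open scoped Kronecker ComplexOrder

variable {ι : Type*} [Fintype ι] [DecidableEq ι]

/-- A quantum state: positive semidefinite matrix of trace one. -/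
def IsState (ρ : Matrix ι ι ℂ) : Prop := ρ.PosSemidef ∧ ρ.trace = 1

/-- The action of `id_n ⊗ N` on block matrices. -/
def idTensorMap (n : ℕ) (N : Matrix ι ι ℂ →ₗ[ℂ] Matrix ι ι ℂ)
    (M : Matrix (Fin n × ι) (Fin n × ι) ℂ) : Matrix (Fin n × ι) (Fin n × ι) ℂ :=
  Matrix.of fun p q => N (Matrix.of fun k l => M (p.1, k) (q.1, l)) p.2 q.2

/-- A quantum channel: completely positive trace preserving linear map. -/
structure Channel (ι : Type*) [Fintype ι] [DecidableEq ι] where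
  map : Matrix ι ι ℂ →ₗ[ℂ] Matrix ι ι ℂ
  cp : ∀ (n : ℕ) (M : Matrix (Fin n × ι) (Fin n × ι) ℂ), M.PosSemidef →
        (idTensorMap n map M).PosSemidef
  tp : ∀ A : Matrix ι ι ℂ, (map A).trace = A.trace

/-- The square root of a positive semidefinite matrix (removed from Mathlib; old definition). -/
noncomputable def Matrix.PosSemidef.sqrt {n : Type*} [Fintype n] [DecidableEq n]
    {A : Matrix n n ℂ} (hA : A.PosSemidef) : Matrix n n ℂ :=
  (hA.isHermitian.eigenvectorUnitary : Matrix n n ℂ) *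
    Matrix.diagonal ((↑) ∘ Real.sqrt ∘ hA.isHermitian.eigenvalues) *
    (star hA.isHermitian.eigenvectorUnitary : Matrix n n ℂ)

/-- The trace norm ‖A‖₁ = Tr √(AᴴA). -/
noncomputable def traceNorm (A : Matrix ι ι ℂ) : ℝ :=
  ((Matrix.posSemidef_conjTranspose_mul_self A).sqrt).trace.re

/-- Trace-norm resource measure ω₁. -/
noncomputable def omega1 (F : Set (Matrix ι ι ℂ)) (ρ : Matrix ι ι ℂ) : ℝ :=
  (1/2) * sInf ((fun σ => traceNorm (ρ - σ)) '' F)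

/-- Trace-norm resource generating power Ω₁. -/
noncomputable def genPower1 (F : Set (Matrix ι ι ℂ)) (N : Matrix ι ι ℂ → Matrix ι ι ℂ) : ℝ :=
  sSup ((fun ρ => omega1 F (N ρ)) '' F)

/-- Trace-norm resource increasing power Ω̃₁. -/
noncomputable def incPower1 (F : Set (Matrix ι ι ℂ)) (N : Matrix ι ι ℂ → Matrix ι ι ℂ) : ℝ :=
  sSup ((fun ρ => omega1 F (N ρ) - omega1 F ρ) '' {ρ | IsState ρ})

/-- Holevo–Helstrom success probability of discriminating two channels with probe `ρ`. -/
noncomputable def psuccPair (N M : Matrix ι ι ℂ → Matrix ι ι ℂ) (ρ : Matrix ι ι ℂ) : ℝ :=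
  1/2 + (1/4) * traceNorm (N ρ - M ρ)

/-- Success probability of discriminating `N` from the set of channels `Free` with probe `ρ`. -/
noncomputable def psuccChan (N : Matrix ι ι ℂ → Matrix ι ι ℂ) (Free : Set (Channel ι))
    (ρ : Matrix ι ι ℂ) : ℝ :=
  sInf ((fun M : Channel ι => psuccPair N (⇑M.map) ρ) '' Free)

/-- Maximum success probability of discriminating `N` from `Free` using probes from `F`. -/
noncomputable def psuccFF (N : Matrix ι ι ℂ → Matrix ι ι ℂ) (Free : Set (Channel ι))
    (F : Set (Matrix ι ι ℂ)) : ℝ :=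
  sSup ((fun ρ => psuccChan N Free ρ) '' F)

/-!
Replacement channels give `p(ρ) ≤ 1/2 + ω₁(N ρ)/2`, and since free channels preserve `F`, every free
probe `σ` has `p(σ) ≥ 1/2 + ω₁(N σ)/2`. As `ω₁` is `1/2`-Lipschitz for the trace norm and channels
contract the trace norm, `p(ρ) - p(σ) ≤ ‖ρ - σ‖₁ / 4`; minimising over `σ ∈ F` gives the bound.
The trace-norm facts all come from one estimate: `‖P - Q‖₁ ≤ Tr P + Tr Q` for `P, Q ≥ 0`, with
equality for the Jordan decomposition `A = A⁺ - A⁻`.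
-/

open Matrix
open scoped MatrixOrder

namespace Matrix

lemma PosSemidef.sqrt_eq_cfcSqrt {A : Matrix ι ι ℂ} (hA : A.PosSemidef) : hA.sqrt = CFC.sqrt A := by
  rw [CFC.sqrt_eq_real_sqrt A hA.nonneg, cfcₙ_eq_cfc, hA.1.cfc_eq, IsHermitian.cfc,
    Unitary.conjStarAlgAut_apply]
  rfl

lemma trace_mul_nonneg {P X : Matrix ι ι ℂ} (hP : 0 ≤ P) (hX : 0 ≤ X) : 0 ≤ (P * X).trace := by
  set R := CFC.sqrt P
  have hR : star R = R := (IsSelfAdjoint.of_nonneg (CFC.sqrt_nonneg P)).star_eq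
  have hconj : 0 ≤ star R * X * R := star_left_conjugate_nonneg hX R
  have hcycle : (P * X).trace = (star R * X * R).trace := by
    rw [hR, ← CFC.sqrt_mul_sqrt_self P hP, mul_assoc, trace_mul_comm, mul_assoc]
  rw [hcycle]
  exact (nonneg_iff_posSemidef.mp hconj).trace_nonneg

lemma trace_mul_le_trace {P S : Matrix ι ι ℂ} (hP : 0 ≤ P) (hS : S ≤ 1) :
    (P * S).trace ≤ P.trace := by
  have := trace_mul_nonneg hP (sub_nonneg.mpr hS)
  rwa [mul_sub, mul_one, trace_sub, sub_nonneg] at this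

end Matrix

lemma traceNorm_eq_re_trace_abs (A : Matrix ι ι ℂ) : traceNorm A = (CFC.abs A).trace.re := by
  rw [traceNorm, PosSemidef.sqrt_eq_cfcSqrt]; rfl

lemma traceNorm_nonneg (A : Matrix ι ι ℂ) : 0 ≤ traceNorm A := by
  rw [traceNorm_eq_re_trace_abs]
  exact (Complex.nonneg_iff.mp (nonneg_iff_posSemidef.mp (CFC.abs_nonneg A)).trace_nonneg).1

lemma Matrix.IsHermitian.traceNorm_eq {A : Matrix ι ι ℂ} (hA : A.IsHermitian) :
    traceNorm A = (A⁺ + A⁻).trace.re := by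
  rw [traceNorm_eq_re_trace_abs, CFC.posPart_add_negPart A hA]

-- With `S` the sign of `A`: `‖A‖₁ = Tr (A S) = Tr (P S) - Tr (Q S)` and `-1 ≤ S ≤ 1`.
lemma traceNorm_le_of_eq_sub {A P Q : Matrix ι ι ℂ} (hP : 0 ≤ P) (hQ : 0 ≤ Q) (hA : A = P - Q) :
    traceNorm A ≤ (P + Q).trace.re := by
  have hsa : IsSelfAdjoint A := hA ▸ (IsSelfAdjoint.of_nonneg hP).sub (IsSelfAdjoint.of_nonneg hQ)
  set sgn : ℝ → ℝ := fun x => if 0 ≤ x then 1 else -1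
  -- the spectrum of a matrix is finite, so `sgn` is continuous on it
  have hcont : ContinuousOn sgn (spectrum ℝ A) := by
    rw [continuousOn_iff_continuous_domRestrict]; fun_prop
  set S := cfc sgn A
  have habs : A * S = CFC.abs A := by
    rw [CFC.abs_eq_cfc_norm A hsa]
    nth_rewrite 1 [← cfc_id' ℝ A]
    rw [← cfc_mul _ _ A]
    refine cfc_congr fun x _ => ?_
    simp only [sgn, Real.norm_eq_abs]
    split_ifs with h
    · rw [mul_one, abs_of_nonneg h]
    · rw [mul_neg_one, abs_of_neg (not_le.mp h)]
  have hS : S ≤ 1 := cfc_le_one _ _ fun x _ => by simp only [sgn]; split_ifs <;> norm_num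
  have hS' : -S ≤ 1 := by
    rw [← cfc_neg]; exact cfc_le_one _ _ fun x _ => by simp only [sgn]; split_ifs <;> norm_num
  have hPS := (Complex.le_def.mp (trace_mul_le_trace hP hS)).1
  have hQS := (Complex.le_def.mp (trace_mul_le_trace hQ hS')).1
  rw [mul_neg, trace_neg, Complex.neg_re] at hQS
  rw [traceNorm_eq_re_trace_abs, ← habs, hA, sub_mul, trace_sub, Complex.sub_re, trace_add,
    Complex.add_re]
  linarith

lemma traceNorm_add_le {A B : Matrix ι ι ℂ} (hA : A.IsHermitian) (hB : B.IsHermitian) :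
    traceNorm (A + B) ≤ traceNorm A + traceNorm B := by
  have hAB : A + B = (A⁺ + B⁺) - (A⁻ + B⁻) := by
    rw [add_sub_add_comm, CFC.posPart_sub_negPart A hA, CFC.posPart_sub_negPart B hB]
  calc traceNorm (A + B) ≤ (A⁺ + B⁺ + (A⁻ + B⁻)).trace.re :=
        traceNorm_le_of_eq_sub (add_nonneg (CFC.posPart_nonneg A) (CFC.posPart_nonneg B))
          (add_nonneg (CFC.negPart_nonneg A) (CFC.negPart_nonneg B)) hAB
    _ = traceNorm A + traceNorm B := by
        rw [hA.traceNorm_eq, hB.traceNorm_eq, ← Complex.add_re, ← trace_add, add_add_add_comm]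

lemma Channel.map_nonneg (M : Channel ι) {A : Matrix ι ι ℂ} (hA : 0 ≤ A) : 0 ≤ M.map A := by
  have hblock := M.cp 1 (A.submatrix Prod.snd Prod.snd) ((nonneg_iff_posSemidef.mp hA).submatrix _)
  have hA : M.map A = (idTensorMap 1 M.map (A.submatrix Prod.snd Prod.snd)).submatrix
      (fun i => ((0 : Fin 1), i)) (fun i => ((0 : Fin 1), i)) := rfl
  rw [hA, nonneg_iff_posSemidef]
  exact hblock.submatrix _

lemma Channel.traceNorm_map_le (M : Channel ι) {A : Matrix ι ι ℂ} (hA : A.IsHermitian) :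
    traceNorm (M.map A) ≤ traceNorm A := by
  have hMA : M.map A = M.map A⁺ - M.map A⁻ := by rw [← map_sub, CFC.posPart_sub_negPart A hA]
  calc traceNorm (M.map A) ≤ (M.map A⁺ + M.map A⁻).trace.re :=
        traceNorm_le_of_eq_sub (M.map_nonneg (CFC.posPart_nonneg A))
          (M.map_nonneg (CFC.negPart_nonneg A)) hMA
    _ = traceNorm A := by rw [← map_add, M.tp, hA.traceNorm_eq]

lemma IsState.map (M : Channel ι) {ρ : Matrix ι ι ℂ} (hρ : IsState ρ) : IsState (M.map ρ) :=
  ⟨nonneg_iff_posSemidef.mp (M.map_nonneg hρ.1.nonneg), by rw [M.tp, hρ.2]⟩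

lemma IsState.traceNorm_sub_le_two {ρ σ : Matrix ι ι ℂ} (hρ : IsState ρ) (hσ : IsState σ) :
    traceNorm (ρ - σ) ≤ 2 := by
  simpa [trace_add, hρ.2, hσ.2, one_add_one_eq_two] using
    traceNorm_le_of_eq_sub hρ.1.nonneg hσ.1.nonneg rfl

section ResourceMeasure

variable {F : Set (Matrix ι ι ℂ)}

lemma omega1_le {ρ σ : Matrix ι ι ℂ} (hσ : σ ∈ F) : omega1 F ρ ≤ 1 / 2 * traceNorm (ρ - σ) := by
  refine mul_le_mul_of_nonneg_left (csInf_le ⟨0, ?_⟩ ⟨σ, hσ, rfl⟩) (by norm_num)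
  rintro _ ⟨τ, -, rfl⟩
  exact traceNorm_nonneg _

lemma le_omega1 (hF : F.Nonempty) {ρ : Matrix ι ι ℂ} {c : ℝ}
    (h : ∀ σ ∈ F, c ≤ 1 / 2 * traceNorm (ρ - σ)) : c ≤ omega1 F ρ := by
  have : 2 * c ≤ sInf ((fun σ => traceNorm (ρ - σ)) '' F) := by
    refine le_csInf (hF.image _) ?_
    rintro _ ⟨σ, hσ, rfl⟩
    linarith [h σ hσ]
  rw [omega1]
  linarith

lemma omega1_le_add_traceNorm (hF : F.Nonempty) (hFherm : ∀ τ ∈ F, τ.IsHermitian)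
    {X Y : Matrix ι ι ℂ} (hX : X.IsHermitian) (hY : Y.IsHermitian) :
    omega1 F X ≤ omega1 F Y + 1 / 2 * traceNorm (X - Y) := by
  suffices omega1 F X - 1 / 2 * traceNorm (X - Y) ≤ omega1 F Y by linarith
  refine le_omega1 hF fun τ hτ => ?_
  have htri : traceNorm (X - τ) ≤ traceNorm (X - Y) + traceNorm (Y - τ) := by
    simpa using traceNorm_add_le (hX.sub hY) (hY.sub (hFherm τ hτ))
  linarith [omega1_le (ρ := X) hτ]

end ResourceMeasure

section Discrimination

variable {F : Set (Matrix ι ι ℂ)} {Free : Set (Channel ι)} {N : Matrix ι ι ℂ → Matrix ι ι ℂ}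

lemma psuccChan_le_psuccPair {M : Channel ι} (hM : M ∈ Free) (ρ : Matrix ι ι ℂ) :
    psuccChan N Free ρ ≤ psuccPair N M.map ρ := by
  refine csInf_le ⟨1 / 2, ?_⟩ ⟨M, hM, rfl⟩
  rintro _ ⟨M', -, rfl⟩
  simp only [psuccPair]
  linarith [traceNorm_nonneg (N ρ - M'.map ρ)]

lemma psuccChan_le_omega1 (hF : F.Nonempty)
    (hRepl : ∀ σ ∈ F, ∃ M ∈ Free, ∀ τ : Matrix ι ι ℂ, M.map τ = τ.trace • σ)
    {ρ : Matrix ι ι ℂ} (hρ : ρ.trace = 1) :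
    psuccChan N Free ρ ≤ 1 / 2 + 1 / 2 * omega1 F (N ρ) := by
  suffices 2 * (psuccChan N Free ρ - 1 / 2) ≤ omega1 F (N ρ) by linarith
  refine le_omega1 hF fun σ hσ => ?_
  obtain ⟨M, hM, hMσ⟩ := hRepl σ hσ
  have := psuccChan_le_psuccPair (N := N) hM ρ
  rw [psuccPair, hMσ, hρ, one_smul] at this
  linarith

lemma le_psuccChan_of_mapsTo (hFree : Free.Nonempty) (hMaps : ∀ M ∈ Free, ∀ σ ∈ F, M.map σ ∈ F)
    {σ : Matrix ι ι ℂ} (hσ : σ ∈ F) :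
    1 / 2 + 1 / 2 * omega1 F (N σ) ≤ psuccChan N Free σ := by
  refine le_csInf (hFree.image _) ?_
  rintro _ ⟨M, hM, rfl⟩
  simp only [psuccPair]
  linarith [omega1_le (ρ := N σ) (hMaps M hM σ hσ)]

lemma psuccChan_le_psuccFF (N : Channel ι) (hFree : Free.Nonempty) (hF : ∀ τ ∈ F, IsState τ)
    {σ : Matrix ι ι ℂ} (hσ : σ ∈ F) : psuccChan N.map Free σ ≤ psuccFF N.map Free F := by
  obtain ⟨M, hM⟩ := hFree
  refine le_csSup ⟨1, ?_⟩ ⟨σ, hσ, rfl⟩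
  rintro _ ⟨τ, hτ, rfl⟩
  have hτ := hF τ hτ
  have hpair : psuccChan N.map Free τ ≤ 1 / 2 + 1 / 4 * traceNorm (N.map τ - M.map τ) :=
    psuccChan_le_psuccPair hM τ
  linarith [(hτ.map N).traceNorm_sub_le_two (hτ.map M)]

end Discrimination

theorem stmt8_general
    (F : Set (Matrix ι ι ℂ)) (hFne : F.Nonempty) (hFstate : ∀ ρ ∈ F, IsState ρ)
    (Free : Set (Channel ι))
    (hFree : ∀ M ∈ Free, ∀ ρ ∈ F, M.map ρ ∈ F)
    (hRepl : ∀ σ ∈ F, ∃ M ∈ Free, ∀ τ : Matrix ι ι ℂ, M.map τ = τ.trace • σ)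
    (N : Channel ι) (ρ : Matrix ι ι ℂ) (hρ : IsState ρ) :
    psuccChan (⇑N.map) Free ρ - psuccFF (⇑N.map) Free F ≤ (1/2) * omega1 F ρ := by
  have hFreeNe : Free.Nonempty := by
    obtain ⟨σ, hσ⟩ := hFne
    obtain ⟨M, hM, -⟩ := hRepl σ hσ
    exact ⟨M, hM⟩
  have hFherm : ∀ τ ∈ F, τ.IsHermitian := fun τ hτ => (hFstate τ hτ).1.1
  suffices 2 * (psuccChan N.map Free ρ - psuccFF N.map Free F) ≤ omega1 F ρ by linarith
  refine le_omega1 hFne fun σ hσ => ?_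
  have hσ' := hFstate σ hσ
  have hρσ : traceNorm (N.map ρ - N.map σ) ≤ traceNorm (ρ - σ) := by
    rw [← map_sub]; exact N.traceNorm_map_le (hρ.1.1.sub hσ'.1.1)
  linarith [psuccChan_le_omega1 (N := N.map) hFne hRepl hρ.2,
    le_psuccChan_of_mapsTo (N := N.map) hFreeNe hFree hσ,
    omega1_le_add_traceNorm hFne hFherm (hρ.map N).1.1 (hσ'.map N).1.1,
    psuccChan_le_psuccFF N hFreeNe hFstate hσ]

/-- the advantage of a resourceful probe state over free probe states in channel
discrimination is bounded by the trace-norm resource measure of the probe. -/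
theorem stmt8
    (F : Set (Matrix ι ι ℂ)) (hFne : F.Nonempty) (hFstate : ∀ ρ ∈ F, IsState ρ)
    (hFconv : Convex ℝ F) (hFclosed : IsClosed F)
    (Free : Set (Channel ι))
    (hFree : ∀ M ∈ Free, ∀ ρ ∈ F, M.map ρ ∈ F)
    (hRepl : ∀ σ ∈ F, ∃ M ∈ Free, ∀ τ : Matrix ι ι ℂ, M.map τ = τ.trace • σ)
    (N : Channel ι) (ρ : Matrix ι ι ℂ) (hρ : IsState ρ) :
    psuccChan (⇑N.map) Free ρ - psuccFF (⇑N.map) Free F ≤ (1/2) * omega1 F ρ :=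
  stmt8_general F hFne hFstate Free hFree hRepl N ρ hρ
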